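/- arXiv:1411.2807 — 2 statements merged into one kernel-verified Lean document; each statement's English description precedes it below -/
import Mathlib

section
/- Let S ≥ 1 and let H : [0,∞) → M_S(ℝ) be continuous with H(t) essentially nonnegative for every t ≥ 0, and let h^*(t) = max_{1≤j≤S} ∑_{i=1}^S H(t)_{ij}. Let x : [0,∞) → ℝ^S be differentiable with x'(t) = H(t)x(t) for all t ≥ 0. Then for every (not necessarily nonnegative) initial value x(0), ‖x(t)‖₁ ≤ exp(∫₀ᵗ h^*(τ) dτ) · ‖x(0)‖₁ for all t ≥ 0. -/
open Set Filter Topology Matrix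

/-!
Rather than splitting `x 0` into its positive and negative parts, we bound `‖x t‖₁` directly:
each `|x_i|` has a right derivative even where `x_i` vanishes, and essential nonnegativity of
`H t` bounds the right derivative of `‖x t‖₁` by `∑ⱼ (∑ᵢ H t i j) |x_j| ≤ h* t ‖x t‖₁`.
A Grönwall comparison with time-dependent rate `h*` then gives the estimate.
-/

/-- `absRightDeriv v w = lim_{h → 0⁺} (|v + h w| - |v|) / h`: the right derivative of `|f|`
at a point where `f = v` and `f' = w`. -/
noncomputable def absRightDeriv (v w : ℝ) : ℝ :=
  if v = 0 then |w| else SignType.sign v * w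

theorem HasDerivWithinAt.abs_Ici {f : ℝ → ℝ} {f' t : ℝ}
    (hf : HasDerivWithinAt f f' (Ici t) t) :
    HasDerivWithinAt (fun s => |f s|) (absRightDeriv (f t) f') (Ici t) t := by
  unfold absRightDeriv
  split_ifs with h
  · rw [hasDerivWithinAt_iff_isLittleO] at hf ⊢
    refine (Asymptotics.IsBigO.of_bound 1 ?_).trans_isLittleO hf
    filter_upwards [self_mem_nhdsWithin] with s (hs : t ≤ s)
    have := abs_abs_sub_abs_le_abs_sub (f s) ((s - t) * f')
    rw [abs_mul, abs_of_nonneg (sub_nonneg.2 hs)] at this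
    simpa [h] using this
  · exact (hasDerivAt_abs h).comp_hasDerivWithinAt t hf

theorem absRightDeriv_mul_self_add (a v w : ℝ) :
    absRightDeriv v (a * v + w) = a * |v| + absRightDeriv v w := by
  unfold absRightDeriv
  split_ifs with h
  · simp [h]
  · rw [← sign_mul_self v]; ring

theorem absRightDeriv_le_abs (v w : ℝ) : absRightDeriv v w ≤ |w| := by
  unfold absRightDeriv
  split_ifs with h
  · rfl
  · rcases lt_or_gt_of_ne h with h | h
    · simp [sign_neg h, neg_le_abs]
    · simp [sign_pos h, le_abs_self]

theorem ContinuousOn.ciSup_of_finite {α β ι : Type*} [TopologicalSpace α]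
    [ConditionallyCompleteLinearOrder β] [TopologicalSpace β] [OrderTopology β] [Finite ι]
    {f : ι → α → β} {s : Set α} (hf : ∀ i, ContinuousOn (f i) s) :
    ContinuousOn (fun x => ⨆ i, f i x) s := by
  have := Fintype.ofFinite ι
  cases isEmpty_or_nonempty ι
  · simp only [iSup_of_empty']
    exact continuousOn_const
  · simp_rw [← Finset.sup'_univ_eq_ciSup]
    exact ContinuousOn.finset_sup'_apply Finset.univ_nonempty fun i _ => hf i

theorem le_exp_integral_mul_of_deriv_right_le {g g' k : ℝ → ℝ} {a b : ℝ}
    (hk : ContinuousOn k (Icc a b)) (hg : ContinuousOn g (Icc a b))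
    (hg' : ∀ t ∈ Ico a b, HasDerivWithinAt g (g' t) (Ici t) t)
    (hbound : ∀ t ∈ Ico a b, g' t ≤ k t * g t) :
    ∀ t ∈ Icc a b, g t ≤ Real.exp (∫ τ in a..t, k τ) * g a := by
  intro t ht
  set K : ℝ → ℝ := fun t => ∫ τ in a..t, k τ
  have hK : ContinuousOn K (Icc a b) := by
    have hab : a ≤ b := ht.1.trans ht.2
    rw [← uIcc_of_le hab] at hk ⊢
    exact intervalIntegral.continuousOn_primitive_interval (hk.integrableOn_compact isCompact_uIcc)
  have hK' : ∀ t ∈ Ico a b, HasDerivWithinAt K (k t) (Ici t) t := by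
    intro t ht
    have hnhds : Icc a b ∈ 𝓝[>] t := nhdsWithin_mono _ Ioi_subset_Ici_self <|
      mem_of_superset (Icc_mem_nhdsGE ht.2) (Icc_subset_Icc_left ht.1)
    exact intervalIntegral.integral_hasDerivWithinAt_right
      ((hk.mono (Icc_subset_Icc_right ht.2.le)).intervalIntegrable_of_Icc ht.1)
      ⟨_, hnhds, hk.aestronglyMeasurable measurableSet_Icc⟩
      ((hk t (Ico_subset_Icc_self ht)).mono_of_mem_nhdsWithin hnhds)
  -- `exp (-K) * g` has nonpositive right derivative, hence is antitone.
  set F : ℝ → ℝ := fun t => Real.exp (-K t) * g t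
  have hF_le : F t ≤ F a :=
    image_le_of_deriv_right_le_deriv_boundary (f := F) (B := fun _ => F a) (B' := 0)
      ((hK.neg.rexp).mul hg) (fun t ht => ((hK' t ht).neg.exp).mul (hg' t ht)) le_rfl
      continuousOn_const (fun _ _ => hasDerivWithinAt_const _ _ _)
      (fun t ht => by
        have := mul_le_mul_of_nonneg_left (hbound t ht) (Real.exp_pos (-K t)).le
        simp only [Pi.zero_apply, Pi.neg_apply]
        linarith) ht
  have hKa : K a = 0 := intervalIntegral.integral_same
  calc g t = Real.exp (K t) * F t := by
        simp only [F, ← mul_assoc, ← Real.exp_add, add_neg_cancel, Real.exp_zero, one_mul]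
    _ ≤ Real.exp (K t) * F a := mul_le_mul_of_nonneg_left hF_le (Real.exp_pos _).le
    _ = Real.exp (K t) * g a := by simp [F, hKa]

theorem absRightDeriv_mulVec_le {n : Type*} [Fintype n] [DecidableEq n] {M : Matrix n n ℝ}
    (hM : ∀ i j, i ≠ j → 0 ≤ M i j) (v : n → ℝ) (i : n) :
    absRightDeriv (v i) ((M *ᵥ v) i) ≤ (M *ᵥ |v|) i := by
  simp only [Matrix.mulVec, dotProduct, Pi.abs_apply]
  rw [← Finset.add_sum_erase _ _ (Finset.mem_univ i),
    ← Finset.add_sum_erase _ _ (Finset.mem_univ i), absRightDeriv_mul_self_add]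
  gcongr
  calc absRightDeriv (v i) (∑ j ∈ Finset.univ.erase i, M i j * v j)
      ≤ ∑ j ∈ Finset.univ.erase i, |M i j * v j| :=
        (absRightDeriv_le_abs _ _).trans (Finset.abs_sum_le_sum_abs _ _)
    _ = ∑ j ∈ Finset.univ.erase i, M i j * |v j| := Finset.sum_congr rfl fun j hj => by
        rw [abs_mul, abs_of_nonneg (hM i j (Finset.ne_of_mem_erase hj).symm)]

theorem sum_mulVec_le_ciSup_sum_mul {m n : Type*} [Fintype m] [Fintype n] (M : Matrix m n ℝ)
    {y : n → ℝ} (hy : 0 ≤ y) : ∑ i, (M *ᵥ y) i ≤ (⨆ j, ∑ i, M i j) * ∑ j, y j := by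
  calc ∑ i, (M *ᵥ y) i = ∑ j, (∑ i, M i j) * y j := by
        simp only [Matrix.mulVec, dotProduct, Finset.sum_mul]
        exact Finset.sum_comm
    _ ≤ ∑ j, (⨆ j, ∑ i, M i j) * y j := Finset.sum_le_sum fun j _ =>
        mul_le_mul_of_nonneg_right
          (le_ciSup (f := fun j => ∑ i, M i j) (Finite.bddAbove_range _) j) (hy j)
    _ = (⨆ j, ∑ i, M i j) * ∑ j, y j := Finset.mul_sum _ _ _ |>.symm

theorem l1_upper_bound_general
    (S : ℕ)
    (H : ℝ → Matrix (Fin S) (Fin S) ℝ)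
    (hHcont : ∀ i j, ContinuousOn (fun t => H t i j) (Ici (0 : ℝ)))
    (hHess : ∀ t ∈ Ici (0 : ℝ), ∀ i j, i ≠ j → 0 ≤ H t i j)
    (hstar : ℝ → ℝ)
    (hhstar : ∀ t, hstar t = ⨆ j, ∑ i, H t i j)
    (x : ℝ → Fin S → ℝ)
    (hx : ∀ t ∈ Ici (0 : ℝ), ∀ i,
      HasDerivWithinAt (fun s => x s i) ((H t).mulVec (x t) i) (Ici 0) t) :
    ∀ t ∈ Ici (0 : ℝ),
      ∑ i, |x t i| ≤ Real.exp (∫ τ in (0 : ℝ)..t, hstar τ) * ∑ i, |x 0 i| := by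
  intro t ht
  have hstar_cont : ContinuousOn hstar (Icc 0 t) := by
    rw [funext hhstar]
    exact ContinuousOn.ciSup_of_finite fun j =>
      continuousOn_finsetSum _ fun i _ => (hHcont i j).mono Icc_subset_Ici_self
  have hx_cont : ∀ i, ContinuousOn (fun s => x s i) (Icc 0 t) := fun i s hs =>
    (hx s hs.1 i).continuousWithinAt.mono Icc_subset_Ici_self
  refine le_exp_integral_mul_of_deriv_right_le hstar_cont
    (continuousOn_finsetSum _ fun i _ => (hx_cont i).abs)
    (g' := fun s => ∑ i, absRightDeriv (x s i) ((H s *ᵥ x s) i))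
    (fun s hs => HasDerivWithinAt.fun_sum fun i _ =>
      ((hx s hs.1 i).mono (Ici_subset_Ici.2 hs.1)).abs_Ici)
    (fun s hs => ?_) t ⟨ht, le_rfl⟩
  calc ∑ i, absRightDeriv (x s i) ((H s *ᵥ x s) i) ≤ ∑ i, (H s *ᵥ |x s|) i :=
        Finset.sum_le_sum fun i _ => absRightDeriv_mulVec_le (hHess s hs.1) _ i
    _ ≤ (⨆ j, ∑ i, H s i j) * ∑ i, |x s| i := sum_mulVec_le_ciSup_sum_mul _ (abs_nonneg _)
    _ = hstar s * ∑ i, |x s i| := by rw [hhstar]; rfl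

/-- Upper bound `‖x(t)‖₁ ≤ exp(∫₀ᵗ h*(τ) dτ) ‖x(0)‖₁` for solutions of
`x' = H(t)x` with essentially nonnegative `H(t)` and arbitrary initial
condition, where `h*(t)` is the largest column sum of `H(t)`. -/
theorem l1_upper_bound
    (S : ℕ) (hS : 1 ≤ S)
    (H : ℝ → Matrix (Fin S) (Fin S) ℝ)
    (hHcont : ∀ i j, ContinuousOn (fun t => H t i j) (Ici (0 : ℝ)))
    (hHess : ∀ t ∈ Ici (0 : ℝ), ∀ i j, i ≠ j → 0 ≤ H t i j)
    (hstar : ℝ → ℝ)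
    (hhstar : ∀ t, hstar t = ⨆ j, ∑ i, H t i j)
    (x : ℝ → Fin S → ℝ)
    (hx : ∀ t ∈ Ici (0 : ℝ), ∀ i,
      HasDerivWithinAt (fun s => x s i) ((H t).mulVec (x t) i) (Ici 0) t) :
    ∀ t ∈ Ici (0 : ℝ),
      ∑ i, |x t i| ≤ Real.exp (∫ τ in (0 : ℝ)..t, hstar τ) * ∑ i, |x 0 i| :=
  l1_upper_bound_general S H hHcont hHess hstar hhstar x hx
end

section
/- (Theorem 2, upper bound and weak ergodicity for the birth–death–catastrophe process.) In the BDCP setting, assume additionally that H(t) := D B(t) D⁻¹ is essentially nonnegative for every t ≥ 0, and set α_k(t) = −∑_{i=1}^S H(t)_{ik} for 1 ≤ k ≤ S and β^*(t) = min_{1≤k≤S} α_k(t). Then for any two differentiable functions z*, z** : [0,∞) → ℝ^S satisfying z'(t) = B(t)z(t) + f(t) for all t ≥ 0, where f(t) = (λ_0(t), 0, …, 0)ᵀ, one has ‖D(z*(t) − z**(t))‖₁ ≤ exp(−∫₀ᵗ β^*(τ) dτ) · ‖D(z*(0) − z**(0))‖₁ for all t ≥ 0; moreover, if ∫₀^∞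 β^*(t) dt = +∞ then ‖z*(t) − z**(t)‖₁ → 0 as t → ∞. -/
/-!
The difference `y = D (z* - z**)` solves the homogeneous system `y' = H(t) y`: the inhomogeneity
cancels and `D B = H D`. For essentially nonnegative `H`, the right derivative of `|y_i|` is at most
`∑_j H_ij |y_j|`, since the sign of `y_i` can only lower the nonnegative off-diagonal terms; summing
over `i`, the right Dini derivative of `‖y‖₁` is at most `∑_j (∑_i H_ij) |y_j| ≤ -β* ‖y‖₁`.
Multiplying `y` by `exp ∫₀ᵗ β*` shifts `H` by `β*` and reduces the bound to the case `β* = 0`,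
where `‖y‖₁` is nonincreasing. If `∫₀^∞ β* = ∞` then `D (z* - z**) → 0`, hence `z* - z** → 0`
because `D` is invertible.
-/

open Set Filter Topology Matrix

/-- The reduced (transposed-intensity) matrix `B(t)` of a finite
birth–death–catastrophe process on `{0,…,S}` with birth rates `λ_k`, death
rates `μ_k` and catastrophe rates `ξ_k` (1-based indices `1,…,S` encoded by
`i : Fin S ↦ i+1`): `B_{ij} = T_{ij} − λ₀·[i = 1]` where `T` is tridiagonal
with `T_{i,i−1} = λ_{i−1}`, `T_{i,i+1} = μ_{i+1}`,
`T_{ii} = −(λ_i + μ_i + ξ_i)`. -/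
def bdcpB (S : ℕ) (lam mu xi : ℕ → ℝ → ℝ) (t : ℝ) : Matrix (Fin S) (Fin S) ℝ :=
  fun i j =>
    (if (i : ℕ) = (j : ℕ) + 1 then lam (i : ℕ) t
     else if (j : ℕ) = (i : ℕ) + 1 then mu ((i : ℕ) + 2) t
     else if i = j then -(lam ((i : ℕ) + 1) t + mu ((i : ℕ) + 1) t + xi ((i : ℕ) + 1) t)
     else 0)
    - (if (i : ℕ) = 0 then lam 0 t else 0)

/-- The upper-triangular matrix `D` with `D_{kj} = d_k` for `j ≥ k`
(1-based weights `d_1,…,d_S`). -/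
def triD (S : ℕ) (d : ℕ → ℝ) : Matrix (Fin S) (Fin S) ℝ :=
  fun i j => if i ≤ j then d ((i : ℕ) + 1) else 0

theorem HasDerivWithinAt.matrix_mulVec {m n : Type*} [Fintype m] [Fintype n]
    (M : Matrix m n ℝ) {w : ℝ → n → ℝ} {w' : n → ℝ} {s : Set ℝ} {t : ℝ}
    (hw : HasDerivWithinAt w w' s t) : HasDerivWithinAt (fun u => M *ᵥ w u) (M *ᵥ w') s t :=
  (LinearMap.toContinuousLinearMap M.mulVecLin).hasFDerivAt.comp_hasDerivWithinAt t hw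

theorem HasDerivWithinAt.matrix_mulVec_conj {n : Type*} [Fintype n] [DecidableEq n]
    {D B : Matrix n n ℝ} (hD : IsUnit D.det) {w : ℝ → n → ℝ} {s : Set ℝ} {t : ℝ}
    (hw : HasDerivWithinAt w (B *ᵥ w t) s t) :
    HasDerivWithinAt (fun u => D *ᵥ w u) ((D * B * D⁻¹) *ᵥ (D *ᵥ w t)) s t := by
  rw [mulVec_mulVec, nonsing_inv_mul_cancel_right _ _ hD, ← mulVec_mulVec]
  exact hw.matrix_mulVec D

theorem HasDerivWithinAt.sub_of_mulVec_add {n : Type*} [Fintype n] {B : Matrix n n ℝ}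
    {z₁ z₂ : ℝ → n → ℝ} {f : n → ℝ} {s : Set ℝ} {t : ℝ}
    (h₁ : HasDerivWithinAt z₁ (B *ᵥ z₁ t + f) s t) (h₂ : HasDerivWithinAt z₂ (B *ᵥ z₂ t + f) s t) :
    HasDerivWithinAt (fun u => z₁ u - z₂ u) (B *ᵥ (z₁ t - z₂ t)) s t :=
  (h₁.sub h₂).congr_deriv (by rw [mulVec_sub]; abel)

theorem tendsto_sum_abs_mulVec_zero {α m n : Type*} [Fintype m] [Fintype n] (M : Matrix m n ℝ)
    {v : α → n → ℝ} {l : Filter α} (hv : Tendsto (fun a => ∑ j, |v a j|) l (𝓝 0)) :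
    Tendsto (fun a => ∑ i, |(M *ᵥ v a) i|) l (𝓝 0) := by
  have hv0 : Tendsto v l (𝓝 0) := tendsto_pi_nhds.2 fun j => squeeze_zero_norm
    (fun a => Finset.single_le_sum (f := fun k => |v a k|) (fun k _ => abs_nonneg _)
      (Finset.mem_univ j)) hv
  have hcont : Continuous fun x : n → ℝ => ∑ i, |(M *ᵥ x) i| := by fun_prop
  simpa [Function.comp_def] using (hcont.tendsto 0).comp hv0

theorem ContinuousOn.ciInf_apply {α β ι : Type*} [TopologicalSpace α]
    [ConditionallyCompleteLinearOrder β] [TopologicalSpace β] [OrderTopology β] [Fintype ι]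
    [Nonempty ι] {f : ι → α → β} {s : Set α} (hf : ∀ i, ContinuousOn (f i) s) :
    ContinuousOn (fun a => ⨅ i, f i a) s := by
  simpa only [← Finset.inf'_univ_eq_ciInf] using
    ContinuousOn.finset_inf'_apply Finset.univ_nonempty fun i _ => hf i

theorem ContinuousOn.hasDerivWithinAt_integral_Ici {β : ℝ → ℝ} (hβ : ContinuousOn β (Ici 0))
    {t : ℝ} (ht : 0 ≤ t) : HasDerivWithinAt (fun s => ∫ τ in 0..s, β τ) (β t) (Ici 0) t := by
  set β' : ℝ → ℝ := fun τ => β (max τ 0)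
  have hβ' : Continuous β' :=
    hβ.comp_continuous (continuous_id.max continuous_const) fun τ => le_max_right τ 0
  have hEq : EqOn β' β (Ici 0) := fun τ hτ => by simp only [β', max_eq_left (mem_Ici.1 hτ)]
  have hderiv := intervalIntegral.integral_hasDerivAt_right (hβ'.intervalIntegrable 0 t)
    (hβ'.stronglyMeasurableAtFilter _ _) hβ'.continuousAt
  rw [hEq ht] at hderiv
  have hprim : EqOn (fun s => ∫ τ in 0..s, β τ) (fun s => ∫ τ in 0..s, β' τ) (Ici 0) :=
    fun s hs => intervalIntegral.integral_congr fun τ hτ =>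
      (hEq (by rw [uIcc_of_le (mem_Ici.1 hs)] at hτ; exact hτ.1)).symm
  exact hderiv.hasDerivWithinAt.congr hprim (hprim ht)

/-- When `u x = 0` the hypothesis `hB` covers both signs `σ = ±1`, i.e. it says `|u'| ≤ B`. -/
theorem HasDerivWithinAt.exists_tendsto_slope_abs_le {u : ℝ → ℝ} {u' x B : ℝ}
    (hu : HasDerivWithinAt u u' (Ioi x) x)
    (hB : ∀ σ : ℝ, |σ| = 1 → σ * u x = |u x| → σ * u' ≤ B) :
    ∃ L ≤ B, Tendsto (slope (fun s => |u s|) x) (𝓝[>] x) (𝓝 L) := by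
  have hx : x ∉ Ioi x := lt_irrefl x
  rcases eq_or_ne (u x) 0 with h0 | h0
  · refine ⟨|u'|, abs_le'.2 ⟨?_, ?_⟩, ?_⟩
    · simpa using hB 1 (by simp) (by simp [h0])
    · simpa using hB (-1) (by simp) (by simp [h0])
    · refine ((hasDerivWithinAt_iff_tendsto_slope' hx).1 hu).abs.congr' ?_
      filter_upwards [self_mem_nhdsWithin] with z hz
      rw [slope_def_field, slope_def_field, h0, abs_zero, sub_zero, sub_zero, abs_div,
        abs_of_pos (sub_pos.2 hz)]
  · obtain ⟨σ, hσ, hσu⟩ : ∃ σ : ℝ, |σ| = 1 ∧ 0 < σ * u x := by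
      rcases h0.lt_or_gt with hneg | hpos
      · exact ⟨-1, by simp, by linarith⟩
      · exact ⟨1, by simp, by linarith⟩
    have habs : ∀ z, 0 < σ * u z → |u z| = σ * u z := fun z hz => by
      rw [← abs_of_pos hz, abs_mul, hσ, one_mul]
    refine ⟨σ * u', hB σ hσ (habs x hσu).symm, ?_⟩
    refine (hasDerivWithinAt_iff_tendsto_slope' hx).1 ((hu.const_mul σ).congr_of_eventuallyEq ?_
      (habs x hσu))
    filter_upwards [(hu.continuousWithinAt.const_mul σ).eventually (lt_mem_nhds hσu)]
      with z hz using habs z hz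

def Matrix.IsEssentiallyNonneg {ι : Type*} (A : Matrix ι ι ℝ) : Prop :=
  ∀ i j, i ≠ j → 0 ≤ A i j

namespace Matrix.IsEssentiallyNonneg

variable {ι : Type*} {A : Matrix ι ι ℝ}

theorem add_smul_one [DecidableEq ι] (hA : A.IsEssentiallyNonneg) (c : ℝ) :
    (A + c • (1 : Matrix ι ι ℝ)).IsEssentiallyNonneg := fun i j hij => by
  simpa [one_apply_ne hij] using hA i j hij

theorem mul_mulVec_apply_le [Fintype ι] (hA : A.IsEssentiallyNonneg) (y : ι → ℝ) {i : ι}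
    {σ : ℝ} (hσ : |σ| = 1) (hσy : σ * y i = |y i|) :
    σ * (A *ᵥ y) i ≤ ∑ j, A i j * |y j| := by
  rw [mulVec, dotProduct, Finset.mul_sum]
  refine Finset.sum_le_sum fun j _ => ?_
  rw [mul_left_comm]
  obtain rfl | hji := eq_or_ne j i
  · rw [hσy]
  · calc A i j * (σ * y j) ≤ A i j * |σ * y j| :=
          mul_le_mul_of_nonneg_left (le_abs_self _) (hA i j hji.symm)
      _ = A i j * |y j| := by rw [abs_mul, hσ, one_mul]

theorem exists_tendsto_slope_sum_abs_le [Fintype ι] (hA : A.IsEssentiallyNonneg)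
    {y : ℝ → ι → ℝ} {x : ℝ} (hy : HasDerivWithinAt y (A *ᵥ y x) (Ioi x) x) :
    ∃ L ≤ ∑ j, (∑ i, A i j) * |y x j|,
      Tendsto (slope (fun s => ∑ i, |y s i|) x) (𝓝[>] x) (𝓝 L) := by
  have hrow : ∀ i, ∃ L ≤ ∑ j, A i j * |y x j|,
      Tendsto (slope (fun s => |y s i|) x) (𝓝[>] x) (𝓝 L) := fun i =>
    (hasDerivWithinAt_pi.1 hy i).exists_tendsto_slope_abs_le fun _ hσ hσy =>
      hA.mul_mulVec_apply_le (y x) hσ hσy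
  choose L hL hlim using hrow
  refine ⟨∑ i, L i, ?_, ?_⟩
  · calc ∑ i, L i ≤ ∑ i, ∑ j, A i j * |y x j| := Finset.sum_le_sum fun i _ => hL i
      _ = ∑ j, (∑ i, A i j) * |y x j| := by
        rw [Finset.sum_comm]; simp only [Finset.sum_mul]
  · have hslope : slope (fun s => ∑ i, |y s i|) x =
        fun z => ∑ i, slope (fun s => |y s i|) x z := by
      ext z; simp only [slope_def_field, ← Finset.sum_div, Finset.sum_sub_distrib]
    rw [hslope]
    exact tendsto_finsetSum _ fun i _ => hlim i

end Matrix.IsEssentiallyNonneg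

section Contraction

variable {ι : Type*} [Fintype ι] {A : ℝ → Matrix ι ι ℝ} {y : ℝ → ι → ℝ}

theorem sum_abs_le_of_hasDerivWithinAt_mulVec (hA : ∀ t ≥ 0, (A t).IsEssentiallyNonneg)
    (hcol : ∀ t ≥ 0, ∀ j, ∑ i, A t i j ≤ 0)
    (hy : ∀ t ≥ 0, HasDerivWithinAt y (A t *ᵥ y t) (Ici 0) t) {t : ℝ} (ht : 0 ≤ t) :
    ∑ i, |y t i| ≤ ∑ i, |y 0 i| := by
  have hcont : ContinuousOn (fun s => ∑ i, |y s i|) (Icc 0 t) :=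
    continuousOn_finsetSum _ fun i _ s hs => (continuousWithinAt_pi.1
      ((hy s hs.1).continuousWithinAt.mono Icc_subset_Ici_self) i).abs
  refine image_le_of_liminf_slope_right_le_deriv_boundary hcont le_rfl continuousOn_const
    (fun _ _ => hasDerivWithinAt_const _ _ _) (fun x hx r hr => ?_) ⟨ht, le_rfl⟩
  obtain ⟨L, hL, hlim⟩ :=
    (hA x hx.1).exists_tendsto_slope_sum_abs_le ((hy x hx.1).mono (Ioi_subset_Ici hx.1))
  have hL0 : L ≤ 0 := hL.trans <| Finset.sum_nonpos fun j _ =>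
    mul_nonpos_of_nonpos_of_nonneg (hcol x hx.1 j) (abs_nonneg _)
  exact (hlim.eventually (eventually_lt_nhds (hL0.trans_lt hr))).frequently

theorem sum_abs_le_exp_neg_integral_mul {β : ℝ → ℝ} (hA : ∀ t ≥ 0, (A t).IsEssentiallyNonneg)
    (hβ : ContinuousOn β (Ici 0)) (hcol : ∀ t ≥ 0, ∀ j, β t ≤ -∑ i, A t i j)
    (hy : ∀ t ≥ 0, HasDerivWithinAt y (A t *ᵥ y t) (Ici 0) t) {t : ℝ} (ht : 0 ≤ t) :
    ∑ i, |y t i| ≤ Real.exp (-∫ τ in 0..t, β τ) * ∑ i, |y 0 i| := by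
  classical
  set I : ℝ → ℝ := fun s => ∫ τ in 0..s, β τ with hI
  -- `exp (I s) • y s` solves the system with matrix `A s + β s • 1`, whose column sums are `≤ 0`
  have key := sum_abs_le_of_hasDerivWithinAt_mulVec (A := fun s => A s + β s • 1)
    (y := fun s => Real.exp (I s) • y s) (fun s hs => (hA s hs).add_smul_one _)
    (fun s hs j => ?_) (fun s hs => ?_) ht
  · simp only [Pi.smul_apply, smul_eq_mul, abs_mul, Real.abs_exp, ← Finset.mul_sum, hI,
      intervalIntegral.integral_same, Real.exp_zero, one_mul] at key
    rwa [Real.exp_neg, ← div_eq_inv_mul, le_div_iff₀ (Real.exp_pos _), mul_comm]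
  · simp only [Matrix.add_apply, Matrix.smul_apply, one_apply, Finset.sum_add_distrib,
      smul_eq_mul, mul_ite, mul_one, mul_zero, Finset.sum_ite_eq', Finset.mem_univ, ↓reduceIte]
    linarith [hcol s hs j]
  · refine ((hβ.hasDerivWithinAt_integral_Ici hs).exp.smul (hy s hs)).congr_deriv ?_
    rw [add_mulVec, smul_mulVec, one_mulVec, mulVec_smul]
    module

end Contraction

theorem isUnit_det_triD {S : ℕ} {d : ℕ → ℝ} (hd : ∀ k, 1 ≤ k → k ≤ S → 0 < d k) :
    IsUnit (triD S d).det := by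
  have htri : (triD S d).IsUpperTriangular := fun i j hij => if_neg (not_le.2 hij)
  rw [det_of_isUpperTriangular htri, isUnit_iff_ne_zero, Finset.prod_ne_zero_iff]
  intro i _
  simpa [triD] using (hd (i + 1) (by omega) (by omega)).ne'

theorem continuousOn_bdcpB {S : ℕ} {lam mu xi : ℕ → ℝ → ℝ} {s : Set ℝ}
    (hlam : ∀ k < S, ContinuousOn (lam k) s) (hlamS : ∀ t, lam S t = 0)
    (hmu : ∀ k, 1 ≤ k → k ≤ S → ContinuousOn (mu k) s)
    (hxi : ∀ k, 1 ≤ k → k ≤ S → ContinuousOn (xi k) s) :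
    ContinuousOn (bdcpB S lam mu xi) s := by
  have hlam' : ∀ k ≤ S, ContinuousOn (lam k) s := fun k hk => by
    rcases hk.lt_or_eq with hk | rfl
    · exact hlam k hk
    · simpa only [funext hlamS] using continuousOn_const
  refine continuousOn_pi.2 fun i => continuousOn_pi.2 fun j => ?_
  have hi := i.isLt
  have hj := j.isLt
  refine ContinuousOn.sub ?_ ?_
  · split_ifs
    · exact hlam' _ (by omega)
    · exact hmu _ (by omega) (by omega)
    · exact (((hlam' _ (by omega)).add (hmu _ (by omega) (by omega))).add
        (hxi _ (by omega) (by omega))).neg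
    · exact continuousOn_const
  · split_ifs
    · exact hlam' 0 (by omega)
    · exact continuousOn_const

theorem bdcp_upper_bound_and_ergodicity_general
    (S : ℕ) (hS : 1 ≤ S)
    (lam mu xi : ℕ → ℝ → ℝ) (d : ℕ → ℝ)
    (hlam : ∀ k < S, ContinuousOn (lam k) (Ici 0) ∧ ∀ t ∈ Ici (0 : ℝ), 0 ≤ lam k t)
    (hmu : ∀ k, 1 ≤ k → k ≤ S →
      ContinuousOn (mu k) (Ici 0) ∧ ∀ t ∈ Ici (0 : ℝ), 0 ≤ mu k t)
    (hxi : ∀ k, 1 ≤ k → k ≤ S →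
      ContinuousOn (xi k) (Ici 0) ∧ ∀ t ∈ Ici (0 : ℝ), 0 ≤ xi k t)
    (hlamS : ∀ t, lam S t = 0)
    (hd : ∀ k, 1 ≤ k → k ≤ S → 0 < d k)
    (H : ℝ → Matrix (Fin S) (Fin S) ℝ)
    (hH : ∀ t, H t = triD S d * bdcpB S lam mu xi t * (triD S d)⁻¹)
    (hHess : ∀ t ∈ Ici (0 : ℝ), ∀ i j, i ≠ j → 0 ≤ H t i j)
    (alpha : Fin S → ℝ → ℝ)
    (halpha : ∀ k t, alpha k t = -∑ i, H t i k)
    (bstar : ℝ → ℝ) (hbstar : ∀ t, bstar t = ⨅ k, alpha k t)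
    (f : ℝ → Fin S → ℝ)
    (z₁ z₂ : ℝ → Fin S → ℝ)
    (hz₁ : ∀ t ∈ Ici (0 : ℝ), ∀ i, HasDerivWithinAt (fun s => z₁ s i)
      ((bdcpB S lam mu xi t).mulVec (z₁ t) i + f t i) (Ici 0) t)
    (hz₂ : ∀ t ∈ Ici (0 : ℝ), ∀ i, HasDerivWithinAt (fun s => z₂ s i)
      ((bdcpB S lam mu xi t).mulVec (z₂ t) i + f t i) (Ici 0) t) :
    (∀ t ∈ Ici (0 : ℝ),
      ∑ i, |(triD S d).mulVec (z₁ t - z₂ t) i| ≤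
        Real.exp (-∫ τ in (0 : ℝ)..t, bstar τ) *
          ∑ i, |(triD S d).mulVec (z₁ 0 - z₂ 0) i|) ∧
    (Tendsto (fun T => ∫ τ in (0 : ℝ)..T, bstar τ) atTop atTop →
      Tendsto (fun t => ∑ i, |z₁ t i - z₂ t i|) atTop (nhds 0)) := by
  have : Nonempty (Fin S) := ⟨⟨0, hS⟩⟩
  set D := triD S d
  have hD : IsUnit D.det := isUnit_det_triD hd
  have hHcont : ContinuousOn H (Ici 0) := by
    rw [funext hH]
    exact ((continuous_const.matrix_mul continuous_id).matrix_mul continuous_const)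
      |>.comp_continuousOn (continuousOn_bdcpB (fun k hk => (hlam k hk).1) hlamS
        (fun k h1 h2 => (hmu k h1 h2).1) fun k h1 h2 => (hxi k h1 h2).1)
  have hbcont : ContinuousOn bstar (Ici 0) := by
    rw [funext hbstar, funext fun k => funext (halpha k)]
    exact ContinuousOn.ciInf_apply fun k => (continuousOn_finsetSum _ fun i _ =>
      (continuous_apply_apply i k).comp_continuousOn hHcont).neg
  have hcol : ∀ t ≥ 0, ∀ k, bstar t ≤ -∑ i, H t i k := fun t _ k => by
    rw [hbstar, ← halpha k t]
    exact ciInf_le (finite_range _).bddBelow k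
  have hy : ∀ t ≥ 0, HasDerivWithinAt (fun s => D *ᵥ (z₁ s - z₂ s))
      (H t *ᵥ (D *ᵥ (z₁ t - z₂ t))) (Ici 0) t := fun t ht => by
    rw [hH]
    exact HasDerivWithinAt.matrix_mulVec_conj hD <|
      (hasDerivWithinAt_pi.2 (hz₁ t ht)).sub_of_mulVec_add (hasDerivWithinAt_pi.2 (hz₂ t ht))
  have hbound := fun t (ht : t ∈ Ici (0 : ℝ)) =>
    sum_abs_le_exp_neg_integral_mul hHess hbcont hcol hy ht
  refine ⟨hbound, fun hI => ?_⟩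
  have hexp : Tendsto (fun t => Real.exp (-∫ τ in (0 : ℝ)..t, bstar τ)) atTop (𝓝 0) :=
    Real.tendsto_exp_atBot.comp (tendsto_neg_atTop_atBot.comp hI)
  have hy0 : Tendsto (fun t => ∑ i, |(D *ᵥ (z₁ t - z₂ t)) i|) atTop (𝓝 0) :=
    squeeze_zero' (Eventually.of_forall fun t => Finset.sum_nonneg fun i _ => abs_nonneg _)
      ((eventually_ge_atTop 0).mono hbound) (by simpa using hexp.mul_const _)
  simpa only [mulVec_mulVec, nonsing_inv_mul _ hD, one_mulVec, Pi.sub_apply] using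
    tendsto_sum_abs_mulVec_zero D⁻¹ hy0

/-- Theorem 2 (upper bound and weak ergodicity) for the
birth–death–catastrophe process. -/
theorem bdcp_upper_bound_and_ergodicity
    (S : ℕ) (hS : 1 ≤ S)
    (lam mu xi : ℕ → ℝ → ℝ) (d : ℕ → ℝ)
    (hlam : ∀ k < S, ContinuousOn (lam k) (Ici 0) ∧ ∀ t ∈ Ici (0 : ℝ), 0 ≤ lam k t)
    (hmu : ∀ k, 1 ≤ k → k ≤ S →
      ContinuousOn (mu k) (Ici 0) ∧ ∀ t ∈ Ici (0 : ℝ), 0 ≤ mu k t)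
    (hxi : ∀ k, 1 ≤ k → k ≤ S →
      ContinuousOn (xi k) (Ici 0) ∧ ∀ t ∈ Ici (0 : ℝ), 0 ≤ xi k t)
    (hlamS : ∀ t, lam S t = 0) (hmu0 : ∀ t, mu 0 t = 0)
    (hd : ∀ k, 1 ≤ k → k ≤ S → 0 < d k)
    (H : ℝ → Matrix (Fin S) (Fin S) ℝ)
    (hH : ∀ t, H t = triD S d * bdcpB S lam mu xi t * (triD S d)⁻¹)
    (hHess : ∀ t ∈ Ici (0 : ℝ), ∀ i j, i ≠ j → 0 ≤ H t i j)
    (alpha : Fin S → ℝ → ℝ)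
    (halpha : ∀ k t, alpha k t = -∑ i, H t i k)
    (bstar : ℝ → ℝ) (hbstar : ∀ t, bstar t = ⨅ k, alpha k t)
    (f : ℝ → Fin S → ℝ)
    (hf : ∀ t, ∀ i : Fin S, f t i = if (i : ℕ) = 0 then lam 0 t else 0)
    (z₁ z₂ : ℝ → Fin S → ℝ)
    (hz₁ : ∀ t ∈ Ici (0 : ℝ), ∀ i, HasDerivWithinAt (fun s => z₁ s i)
      ((bdcpB S lam mu xi t).mulVec (z₁ t) i + f t i) (Ici 0) t)
    (hz₂ : ∀ t ∈ Ici (0 : ℝ), ∀ i, HasDerivWithinAt (fun s => z₂ s i)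
      ((bdcpB S lam mu xi t).mulVec (z₂ t) i + f t i) (Ici 0) t) :
    (∀ t ∈ Ici (0 : ℝ),
      ∑ i, |(triD S d).mulVec (z₁ t - z₂ t) i| ≤
        Real.exp (-∫ τ in (0 : ℝ)..t, bstar τ) *
          ∑ i, |(triD S d).mulVec (z₁ 0 - z₂ 0) i|) ∧
    (Tendsto (fun T => ∫ τ in (0 : ℝ)..T, bstar τ) atTop atTop →
      Tendsto (fun t => ∑ i, |z₁ t i - z₂ t i|) atTop (nhds 0)) :=
  bdcp_upper_bound_and_ergodicity_general S hS lam mu xi d hlam hmu hxi hlamS hd H hH hHess alpha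
    halpha bstar hbstar f z₁ z₂ hz₁ hz₂
end
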